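/- Let n ≥ 3 and b, c, x, y ∈ ℂ with b ≠ 0, c ≠ 0, bc = 1, x + y/b ≠ 1, and x² ≠ cy²/b. For 1 ≤ i ≤ n−1 let A_i = L_i([[0, b],[c, 0]]) and B_i = L_i([[x, y],[cy/b, x]]) be n×n complex matrices. Then the only subspaces V of ℂⁿ with A_i V ⊆ V and B_i V ⊆ V for all 1 ≤ i ≤ n−1 are V = 0 and V = ℂⁿ; i.e., the family {A_i, B_i : 1 ≤ i ≤ n−1} is irreducible. -/
import Mathlib


open Matrix

/-- `localBlock n k M` is the `n × n` matrix agreeing with the identity matrix except that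
its `2 × 2` block in (0-based) rows and columns `k, k + 1` equals `M`.  For `1 ≤ i ≤ n - 1`
(1-based indexing), the matrix `L_i(M)` of the paper is `localBlock n (i - 1) M`. -/
def localBlock (n k : ℕ) (M : Matrix (Fin 2) (Fin 2) ℂ) : Matrix (Fin n) (Fin n) ℂ :=
  fun j l =>
    if j.val = k ∧ l.val = k then M 0 0
    else if j.val = k ∧ l.val = k + 1 then M 0 1
    else if j.val = k + 1 ∧ l.val = k then M 1 0
    else if j.val = k + 1 ∧ l.val = k + 1 then M 1 1
    else if j = l then 1 else 0

lemma localBlock_mulVec_apply {n k : ℕ} (hk : k + 1 < n) (M : Matrix (Fin 2) (Fin 2) ℂ)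
    (u : Fin n → ℂ) (j : Fin n) :
    (localBlock n k M).mulVec u j =
      if j.val = k then M 0 0 * u ⟨k, by omega⟩ + M 0 1 * u ⟨k + 1, hk⟩
      else if j.val = k + 1 then M 1 0 * u ⟨k, by omega⟩ + M 1 1 * u ⟨k + 1, hk⟩
      else u j := by
  classical
  have hkn : k < n := by omega
  have hne : (⟨k, hkn⟩ : Fin n) ≠ ⟨k + 1, hk⟩ := by simp [Fin.ext_iff]
  show ∑ l, localBlock n k M j l * u l = _
  by_cases hj : j.val = k
  · have step : ∀ l : Fin n, localBlock n k M j l * u l =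
        (if (⟨k, hkn⟩ : Fin n) = l then M 0 0 * u l else 0)
          + (if (⟨k + 1, hk⟩ : Fin n) = l then M 0 1 * u l else 0) := by
      intro l
      rcases eq_or_ne l ⟨k, hkn⟩ with h0 | h0
      · subst h0; simp [localBlock, hj, hne]
      rcases eq_or_ne l ⟨k + 1, hk⟩ with h1 | h1
      · subst h1; simp [localBlock, hj]
      · have hl0 : l.val ≠ k := fun h => h0 (Fin.ext h)
        have hl1 : l.val ≠ k + 1 := fun h => h1 (Fin.ext h)
        have hjl : j ≠ l := fun h => hl0 (h ▸ hj)
        simp [localBlock, hj, hl0, hl1, hjl, h0.symm, h1.symm]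
    simp only [step, Finset.sum_add_distrib, Finset.sum_ite_eq, Finset.mem_univ, if_true, hj,
      if_pos]
  · by_cases hj' : j.val = k + 1
    · have step : ∀ l : Fin n, localBlock n k M j l * u l =
          (if (⟨k, hkn⟩ : Fin n) = l then M 1 0 * u l else 0)
            + (if (⟨k + 1, hk⟩ : Fin n) = l then M 1 1 * u l else 0) := by
        intro l
        rcases eq_or_ne l ⟨k, hkn⟩ with h0 | h0
        · subst h0; simp [localBlock, hj, hj']
        rcases eq_or_ne l ⟨k + 1, hk⟩ with h1 | h1
        · subst h1; simp [localBlock, hj, hj']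
        · have hl0 : l.val ≠ k := fun h => h0 (Fin.ext h)
          have hl1 : l.val ≠ k + 1 := fun h => h1 (Fin.ext h)
          have hjl : j ≠ l := fun h => hl1 (h ▸ hj')
          simp [localBlock, hj, hj', hl0, hl1, hjl, h0.symm, h1.symm]
      simp only [step, Finset.sum_add_distrib, Finset.sum_ite_eq, Finset.mem_univ, if_true, hj,
        hj', if_neg, if_pos]
      simp [hj]
    · have step : ∀ l : Fin n, localBlock n k M j l * u l =
          if j = l then u l else 0 := by
        intro l
        by_cases hjl : j = l
        · subst hjl; simp [localBlock, hj, hj']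
        · simp [localBlock, hj, hj', hjl]
      simp [step, Finset.sum_ite_eq, hj, hj']

def eV {n : ℕ} (m : Fin n) : Fin n → ℂ := fun j => if j = m then 1 else 0

section aux
variable {n : ℕ} {b c x y : ℂ} {V : Submodule ℂ (Fin n → ℂ)}

lemma proj_mem (hb : b ≠ 0) (hd : x - 1 + y / b ≠ 0)
    (hV' : ∀ k, k + 1 < n → ∀ w ∈ V,
      (localBlock n k !![0, b; c, 0]).mulVec w ∈ V ∧
      (localBlock n k !![x, y; c * y / b, x]).mulVec w ∈ V) :
    ∀ w ∈ V, ∀ k, (hk : k + 1 < n) →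
      (fun j : Fin n => if j.val = k ∨ j.val = k + 1 then w j else 0) ∈ V := by
  intro w hw k hk
  have hd' : b * y - b ^ 2 + b ^ 2 * x ≠ 0 := by
    intro h
    apply hd
    have h2 : x - 1 + y / b = (b * y - b ^ 2 + b ^ 2 * x) / b ^ 2 := by
      field_simp
      ring
    rw [h2, h]
    simp
  obtain ⟨hAw, hBw⟩ := hV' k hk w hw
  have key : (fun j : Fin n => if j.val = k ∨ j.val = k + 1 then w j else 0)
      = (x - 1 + y / b)⁻¹ • ((localBlock n k !![x, y; c * y / b, x]).mulVec w
          - (y / b) • (localBlock n k !![0, b; c, 0]).mulVec w - (1 - y / b) • w) := by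
    funext j
    have h1 := localBlock_mulVec_apply hk !![x, y; c * y / b, x] w j
    have h2 := localBlock_mulVec_apply hk !![0, b; c, 0] w j
    simp only [Pi.smul_apply, Pi.sub_apply, smul_eq_mul, h1, h2]
    by_cases hj : j.val = k
    · have hje : j = ⟨k, by omega⟩ := Fin.ext hj
      rw [hje]
      simp only [hje] at hj
      simp only [Fin.val_mk, eq_self_iff_true, if_true, true_or, if_pos,
        Matrix.of_apply, Matrix.cons_val', Matrix.cons_val_zero, Matrix.cons_val_one, Matrix.head_cons,
        Matrix.empty_val', Matrix.cons_val_fin_one, Matrix.head_fin_const]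
      have hE : x * w ⟨k, by omega⟩ + y * w ⟨k + 1, hk⟩
            - y / b * (0 * w ⟨k, by omega⟩ + b * w ⟨k + 1, hk⟩)
            - (1 - y / b) * w ⟨k, by omega⟩ = (x - 1 + y / b) * w ⟨k, by omega⟩ := by
        field_simp
        ring
      rw [hE, inv_mul_cancel_left₀ hd]
    · by_cases hj' : j.val = k + 1
      · have hje : j = ⟨k + 1, hk⟩ := Fin.ext hj'
        rw [hje]
        simp only [hje] at hj hj'
        have hne : ¬(k + 1 = k) := by omega
        simp only [Fin.val_mk, eq_self_iff_true, if_true, or_true, hne, if_false,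
          Matrix.of_apply, Matrix.cons_val', Matrix.cons_val_zero, Matrix.cons_val_one, Matrix.head_cons,
          Matrix.empty_val', Matrix.cons_val_fin_one, Matrix.head_fin_const]
        have hE : c * y / b * w ⟨k, by omega⟩ + x * w ⟨k + 1, hk⟩
              - y / b * (c * w ⟨k, by omega⟩ + 0 * w ⟨k + 1, hk⟩)
              - (1 - y / b) * w ⟨k + 1, hk⟩ = (x - 1 + y / b) * w ⟨k + 1, hk⟩ := by
          field_simp
          ring
        rw [hE, inv_mul_cancel_left₀ hd]
      · simp only [hj, hj', if_false, or_self, if_neg, not_false_iff]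
        have hE : w j - y / b * w j - (1 - y / b) * w j = 0 := by ring
        rw [hE, mul_zero]
  rw [key]
  exact V.smul_mem _ (V.sub_mem (V.sub_mem hBw (V.smul_mem _ hAw)) (V.smul_mem _ hw))

lemma ladder (hn : 0 < n) (hb : b ≠ 0) (hc : c ≠ 0)
    (hV' : ∀ k, k + 1 < n → ∀ w ∈ V,
      (localBlock n k !![0, b; c, 0]).mulVec w ∈ V ∧
      (localBlock n k !![x, y; c * y / b, x]).mulVec w ∈ V)
    (m : Fin n) (hm : eV m ∈ V) : V = ⊤ := by
  have stepUp : ∀ k, (hk : k + 1 < n) → eV (⟨k, by omega⟩ : Fin n) ∈ V →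
      eV (⟨k + 1, hk⟩ : Fin n) ∈ V := by
    intro k hk he
    have hz := (hV' k hk _ he).1
    have hzz : (localBlock n k !![0, b; c, 0]).mulVec (eV (⟨k, by omega⟩ : Fin n))
        = c • eV (⟨k + 1, hk⟩ : Fin n) := by
      funext j
      rw [localBlock_mulVec_apply hk]
      by_cases hj : j.val = k
      · have : ((⟨k + 1, hk⟩ : Fin n) : Fin n) ≠ ⟨k, by omega⟩ := by simp [Fin.ext_iff]
        simp [hj, eV, this, Fin.ext_iff]
      · by_cases hj' : j.val = k + 1
        · have : ((⟨k, by omega⟩ : Fin n) : Fin n) ≠ ⟨k + 1, hk⟩ := by simp [Fin.ext_iff]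
          simp [hj, hj', eV, this, Fin.ext_iff]
        · have h0 : j ≠ ⟨k, by omega⟩ := fun h => hj (by simp [h])
          have h1 : j ≠ ⟨k + 1, hk⟩ := fun h => hj' (by simp [h])
          simp [hj, hj', eV, h0, h1]
    rw [hzz] at hz
    have := V.smul_mem c⁻¹ hz
    rwa [smul_smul, inv_mul_cancel₀ hc, one_smul] at this
  have stepDown : ∀ k, (hk : k + 1 < n) → eV (⟨k + 1, hk⟩ : Fin n) ∈ V →
      eV (⟨k, by omega⟩ : Fin n) ∈ V := by
    intro k hk he
    have hz := (hV' k hk _ he).1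
    have hzz : (localBlock n k !![0, b; c, 0]).mulVec (eV (⟨k + 1, hk⟩ : Fin n))
        = b • eV (⟨k, by omega⟩ : Fin n) := by
      funext j
      rw [localBlock_mulVec_apply hk]
      by_cases hj : j.val = k
      · have : ((⟨k, by omega⟩ : Fin n) : Fin n) ≠ ⟨k + 1, hk⟩ := by simp [Fin.ext_iff]
        simp [hj, eV, this, Fin.ext_iff]
      · by_cases hj' : j.val = k + 1
        · have : ((⟨k + 1, hk⟩ : Fin n) : Fin n) ≠ ⟨k, by omega⟩ := by simp [Fin.ext_iff]
          simp [hj, hj', eV, this, Fin.ext_iff]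
        · have h0 : j ≠ ⟨k, by omega⟩ := fun h => hj (by simp [h])
          have h1 : j ≠ ⟨k + 1, hk⟩ := fun h => hj' (by simp [h])
          simp [hj, hj', eV, h0, h1]
    rw [hzz] at hz
    have := V.smul_mem b⁻¹ hz
    rwa [smul_smul, inv_mul_cancel₀ hb, one_smul] at this
  -- go down to 0
  have hdown : ∀ s, ∀ (hs : s < n), eV (⟨s, hs⟩ : Fin n) ∈ V →
      eV (⟨0, by omega⟩ : Fin n) ∈ V := by
    intro s
    induction s with
    | zero => intro hs h; exact h
    | succ t ih =>
      intro hs h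
      exact ih (by omega) (stepDown t hs h)
  have h0 : eV (⟨0, by omega⟩ : Fin n) ∈ V := hdown m.val m.isLt (by
    have : (⟨m.val, m.isLt⟩ : Fin n) = m := Fin.ext rfl
    rwa [this])
  have hall : ∀ t, (ht : t < n) → eV (⟨t, ht⟩ : Fin n) ∈ V := by
    intro t
    induction t with
    | zero => intro ht; exact h0
    | succ s ih =>
      intro ht
      exact stepUp s ht (ih (by omega))
  rw [Submodule.eq_top_iff']
  intro w
  have hw : w = ∑ m : Fin n, w m • eV m := by
    funext j
    simp only [Finset.sum_apply, Pi.smul_apply, eV, smul_eq_mul, mul_ite, mul_one, mul_zero]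
    rw [Finset.sum_ite_eq Finset.univ j w]
    simp
  rw [hw]
  exact Submodule.sum_mem _ fun m _ => V.smul_mem _ (hall m.val m.isLt)

lemma single_eV_mem {m : Fin n} {a : ℂ} (ha : a ≠ 0) (w : Fin n → ℂ) (hw : w ∈ V)
    (hwm : w m = a) (h0 : ∀ j, j ≠ m → w j = 0) : eV m ∈ V := by
  have he : eV m = a⁻¹ • w := by
    funext j
    by_cases hj : j = m
    · subst hj; simp [eV, hwm, inv_mul_cancel₀ ha]
    · simp [eV, hj, h0 j hj]
  rw [he]
  exact V.smul_mem _ hw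

lemma isolate (hn : 3 ≤ n) (hb : b ≠ 0) (hd : x - 1 + y / b ≠ 0)
    (hV' : ∀ k, k + 1 < n → ∀ w ∈ V,
      (localBlock n k !![0, b; c, 0]).mulVec w ∈ V ∧
      (localBlock n k !![x, y; c * y / b, x]).mulVec w ∈ V) :
    ∀ k, ∀ (hk : k + 1 < n), ∀ v ∈ V,
      (∀ j : Fin n, j.val ≠ k → j.val ≠ k + 1 → v j = 0) →
      (v ⟨k, by omega⟩ ≠ 0 ∨ v ⟨k + 1, hk⟩ ≠ 0) →
      ∃ m : Fin n, eV m ∈ V := by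
  intro k hk v hv hsupp hne
  by_cases hα : v ⟨k, by omega⟩ = 0
  · have hβ : v ⟨k + 1, hk⟩ ≠ 0 := by tauto
    refine ⟨⟨k + 1, hk⟩, single_eV_mem hβ v hv rfl ?_⟩
    intro j hj
    by_cases hjk : j.val = k
    · have hje : j = ⟨k, by omega⟩ := Fin.ext hjk
      rw [hje]; exact hα
    · exact hsupp j hjk (fun h => hj (Fin.ext h))
  · by_cases h2 : k + 1 + 1 < n
    · -- use the block at (k+1, k+2) to kill the (k+1)-entry
      have hz : (localBlock n (k + 1) !![0, b; c, 0]).mulVec v ∈ V := (hV' (k + 1) h2 v hv).1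
      have hw := proj_mem hb hd hV' _ hz k hk
      set w : Fin n → ℂ := fun j : Fin n => if j.val = k ∨ j.val = k + 1 then
          (localBlock n (k + 1) !![0, b; c, 0]).mulVec v j else 0 with hwdef
      refine ⟨⟨k, by omega⟩, single_eV_mem hα w hw ?_ ?_⟩
      · show (if (k = k ∨ k = k + 1) then (localBlock n (k + 1) !![0, b; c, 0]).mulVec v
            ⟨k, by omega⟩ else 0) = _
        rw [if_pos (Or.inl rfl)]
        rw [localBlock_mulVec_apply h2, if_neg (show ¬(k = k + 1) by omega),
          if_neg (show ¬(k = k + 1 + 1) by omega)]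
      · intro j hj
        by_cases hjk : j.val = k
        · exact absurd (Fin.ext hjk) hj
        · by_cases hjk1 : j.val = k + 1
          · show (if (j.val = k ∨ j.val = k + 1) then (localBlock n (k + 1) !![0, b; c, 0]).mulVec
                v j else 0) = 0
            rw [if_pos (Or.inr hjk1)]
            rw [localBlock_mulVec_apply h2, if_pos hjk1]
            have hv2 : v ⟨k + 1 + 1, h2⟩ = 0 :=
              hsupp _ (show k + 1 + 1 ≠ k by omega) (show k + 1 + 1 ≠ k + 1 by omega)
            rw [hv2]
            norm_num
          · show (if (j.val = k ∨ j.val = k + 1) then (localBlock n (k + 1) !![0, b; c, 0]).mulVec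
                v j else 0) = 0
            rw [if_neg (by tauto)]
    · -- k = n - 2 ≥ 1 : use the block at (k-1, k)
      have hk1 : 1 ≤ k := by omega
      obtain ⟨k', rfl⟩ : ∃ k', k = k' + 1 := ⟨k - 1, by omega⟩
      have hk' : k' + 1 < n := by omega
      have hz : (localBlock n k' !![0, b; c, 0]).mulVec v ∈ V := (hV' k' hk' v hv).1
      have hw := proj_mem hb hd hV' _ hz k' hk'
      set w : Fin n → ℂ := fun j : Fin n => if j.val = k' ∨ j.val = k' + 1 then
          (localBlock n k' !![0, b; c, 0]).mulVec v j else 0 with hwdef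
      have hba : b * v ⟨k' + 1, hk'⟩ ≠ 0 := mul_ne_zero hb hα
      refine ⟨⟨k', by omega⟩, single_eV_mem hba w hw ?_ ?_⟩
      · show (if (k' = k' ∨ k' = k' + 1) then (localBlock n k' !![0, b; c, 0]).mulVec v
            ⟨k', by omega⟩ else 0) = _
        rw [if_pos (Or.inl rfl)]
        rw [localBlock_mulVec_apply hk', if_pos rfl]
        have hv0 : v ⟨k', by omega⟩ = 0 :=
          hsupp _ (show k' ≠ k' + 1 by omega) (show k' ≠ k' + 1 + 1 by omega)
        rw [hv0]
        norm_num
      · intro j hj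
        by_cases hjk : j.val = k'
        · exact absurd (Fin.ext hjk) hj
        · by_cases hjk1 : j.val = k' + 1
          · show (if (j.val = k' ∨ j.val = k' + 1) then (localBlock n k' !![0, b; c, 0]).mulVec
                v j else 0) = 0
            rw [if_pos (Or.inr hjk1)]
            rw [localBlock_mulVec_apply hk', if_neg (by omega), if_pos hjk1]
            have hv0 : v ⟨k', by omega⟩ = 0 :=
              hsupp _ (show k' ≠ k' + 1 by omega) (show k' ≠ k' + 1 + 1 by omega)
            rw [hv0]
            norm_num
          · show (if (j.val = k' ∨ j.val = k' + 1) then (localBlock n k' !![0, b; c, 0]).mulVec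
                v j else 0) = 0
            rw [if_neg (by tauto)]

end aux

/-- Theorem 5.6, second case, irreducibility part: when `bc = 1` and `x + y/b ≠ 1`,
the homogeneous local representation `ρ₃` of `SBₙ` is irreducible. -/

theorem rho3_local_irreducible_of_bc_eq_one (n : ℕ) (hn : 3 ≤ n) (b c x y : ℂ)
    (hb : b ≠ 0) (hc : c ≠ 0) (hbc : b * c = 1) (hxy1 : x + y / b ≠ 1)
    (hxy2 : x ^ 2 ≠ c * y ^ 2 / b)
    (A B : ℕ → Matrix (Fin n) (Fin n) ℂ)
    (hA : ∀ i, A i = localBlock n (i - 1) !![0, b; c, 0])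
    (hB : ∀ i, B i = localBlock n (i - 1) !![x, y; c * y / b, x]) :
    ∀ V : Submodule ℂ (Fin n → ℂ),
      (∀ i : ℕ, 1 ≤ i → i ≤ n - 1 → ∀ u ∈ V, (A i).mulVec u ∈ V ∧ (B i).mulVec u ∈ V) →
      V = ⊥ ∨ V = ⊤ := by
  intro V hV
  by_cases hbot : V = ⊥
  · exact Or.inl hbot
  right
  have hd : x - 1 + y / b ≠ 0 := fun h => hxy1 (by linear_combination h)
  have hV' : ∀ k, k + 1 < n → ∀ w ∈ V,
      (localBlock n k !![0, b; c, 0]).mulVec w ∈ V ∧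
      (localBlock n k !![x, y; c * y / b, x]).mulVec w ∈ V := by
    intro k hkn w hw
    have h := hV (k + 1) (by omega) (by omega) w hw
    rwa [hA (k + 1), hB (k + 1), Nat.add_sub_cancel] at h
  obtain ⟨u, huV, hu0⟩ : ∃ u ∈ V, u ≠ 0 := by
    by_contra h
    push_neg at h
    exact hbot (le_antisymm (fun v hv => (Submodule.mem_bot ℂ).2 (h v hv)) bot_le)
  obtain ⟨m, hm0⟩ := Function.ne_iff.mp hu0
  have hm : u m ≠ 0 := by simpa using hm0
  have hk : min m.val (n - 2) + 1 < n := by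
    have := m.isLt
    omega
  have hv := proj_mem hb hd hV' u huV (min m.val (n - 2)) hk
  have hsupp : ∀ j : Fin n, j.val ≠ min m.val (n - 2) → j.val ≠ min m.val (n - 2) + 1 →
      (fun j : Fin n => if j.val = min m.val (n - 2) ∨ j.val = min m.val (n - 2) + 1
        then u j else 0) j = 0 := by
    intro j h1 h2
    exact if_neg (by tauto)
  have hne : (fun j : Fin n => if j.val = min m.val (n - 2) ∨ j.val = min m.val (n - 2) + 1
        then u j else 0) ⟨min m.val (n - 2), by omega⟩ ≠ 0 ∨
      (fun j : Fin n => if j.val = min m.val (n - 2) ∨ j.val = min m.val (n - 2) + 1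
        then u j else 0) ⟨min m.val (n - 2) + 1, hk⟩ ≠ 0 := by
    rcases le_or_gt m.val (n - 2) with hm2 | hm2
    · left
      have hkm : min m.val (n - 2) = m.val := min_eq_left hm2
      show (if (min m.val (n - 2) = min m.val (n - 2) ∨
          min m.val (n - 2) = min m.val (n - 2) + 1)
          then u ⟨min m.val (n - 2), by omega⟩ else 0) ≠ 0
      rw [if_pos (Or.inl rfl)]
      have he : (⟨min m.val (n - 2), by omega⟩ : Fin n) = m :=
        Fin.ext (show min m.val (n - 2) = m.val by omega)
      rw [he]
      exact hm
    · right
      have hm1 : m.val = n - 1 := by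
        have := m.isLt
        omega
      show (if (min m.val (n - 2) + 1 = min m.val (n - 2) ∨
          min m.val (n - 2) + 1 = min m.val (n - 2) + 1)
          then u ⟨min m.val (n - 2) + 1, hk⟩ else 0) ≠ 0
      rw [if_pos (Or.inr rfl)]
      have he : (⟨min m.val (n - 2) + 1, hk⟩ : Fin n) = m :=
        Fin.ext (show min m.val (n - 2) + 1 = m.val by omega)
      rw [he]
      exact hm
  obtain ⟨m', hm'⟩ := isolate hn hb hd hV' (min m.val (n - 2)) hk _ hv hsupp hne
  exact ladder (by omega) hb hc hV' m' hm'
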